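/- arXiv:1801.04095 — 3 statements merged into one kernel-verified Lean document; each statement's English description precedes it below -/
import Mathlib

section
/- Let C_1,…,C_k be a partition of [1:p] making the groups A_j := X_{C_j} mutually independent, and let Y = ∑_{w⊆[1:k]} g_w(A_w) be the Hoeffding decomposition of Y. Then for every u ⊆ [1:p], Var(E(Y|X_u)) = ∑_{w⊆[1:k]} Var(E(g_w(A_w)|X_{u∩C_w})), i.e. V_u = ∑_{w⊆[1:k]} V_{u∩C_w}^{g,w}. (Proposition 1) -/
/-!
Write `M_w = E(g_w | X_{u ∩ C_w})`. The function `g_w` only depends on the groups in `w`, which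
are independent of the coordinates of `u` outside `C_w`; so conditioning `g_w` on `X_u` is the
same as conditioning it on `X_{u ∩ C_w}`, and `E(Y | X_u) = ∑_w M_w`. The `M_w` are pairwise
uncorrelated: if `w ⊄ w'`, then `E M_w = E g_w = E(E(g_w | A_∅)) = 0`, and since `M_w'` is
measurable with respect to both `X_{u ∩ (C_w ∪ C_w')}` and `A_w'`,
`E(M_w M_w') = E(g_w M_w') = E(E(g_w | A_w') M_w') = 0`.
Hence the variance of the sum is the sum of the variances.
-/

open MeasureTheory ProbabilityTheory

section General

variable {Ω : Type*} {m₀ : MeasurableSpace Ω} {μ : Measure Ω}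

lemma isPiSystem_image2_inter_measurableSet (m₁ m₂ : MeasurableSpace Ω) :
    IsPiSystem (Set.image2 (· ∩ ·) {s | MeasurableSet[m₁] s} {t | MeasurableSet[m₂] t}) := by
  rintro _ ⟨s, hs, t, ht, rfl⟩ _ ⟨s', hs', t', ht', rfl⟩ -
  exact ⟨s ∩ s', hs.inter hs', t ∩ t', ht.inter ht', (Set.inter_inter_inter_comm s t s' t').symm⟩

lemma sup_eq_generateFrom_image2_inter (m₁ m₂ : MeasurableSpace Ω) :
    m₁ ⊔ m₂ = .generateFrom
      (Set.image2 (· ∩ ·) {s | MeasurableSet[m₁] s} {t | MeasurableSet[m₂] t}) := by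
  refine le_antisymm (sup_le ?_ ?_) (MeasurableSpace.generateFrom_le ?_)
  · exact fun s hs => .basic _ ⟨s, hs, Set.univ, .univ, Set.inter_univ s⟩
  · exact fun t ht => .basic _ ⟨Set.univ, .univ, t, ht, Set.univ_inter t⟩
  · rintro _ ⟨s, hs, t, ht, rfl⟩
    exact (le_sup_left (b := m₂) _ hs).inter (le_sup_right (a := m₁) _ ht)

lemma setIntegral_eq_of_isPiSystem {E : Type*} [NormedAddCommGroup E] [NormedSpace ℝ E]
    {m : MeasurableSpace Ω} (hm : m ≤ m₀) {S : Set (Set Ω)}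
    (h_eq : m = .generateFrom S) (h_pi : IsPiSystem S) {f g : Ω → E}
    (hf : Integrable f μ) (hg : Integrable g μ)
    (basic : ∀ t ∈ S, ∫ x in t, f x ∂μ = ∫ x in t, g x ∂μ)
    (h_univ : ∫ x, f x ∂μ = ∫ x, g x ∂μ) {t : Set Ω} (ht : MeasurableSet[m] t) :
    ∫ x in t, f x ∂μ = ∫ x in t, g x ∂μ := by
  induction t, ht using MeasurableSpace.induction_on_inter h_eq h_pi with
  | empty => simp
  | basic t ht => exact basic t ht
  | compl t ht h =>
    rw [← integral_add_compl (hm t ht) hf, ← integral_add_compl (hm t ht) hg, h] at h_univ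
    exact add_left_cancel h_univ
  | iUnion t hdisj ht h =>
    rw [integral_iUnion (fun i => hm _ (ht i)) hdisj hf.integrableOn,
      integral_iUnion (fun i => hm _ (ht i)) hdisj hg.integrableOn]
    exact tsum_congr h

lemma setIntegral_inter_eq_mul_measureReal_of_indep [IsProbabilityMeasure μ]
    {m₁ m₂ : MeasurableSpace Ω} (h₁ : m₁ ≤ m₀) (h₂ : m₂ ≤ m₀) (hind : Indep m₁ m₂ μ)
    {f : Ω → ℝ} (hf : StronglyMeasurable[m₁] f) {s t : Set Ω}
    (hs : MeasurableSet[m₁] s) (ht : MeasurableSet[m₂] t) :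
    ∫ x in s ∩ t, f x ∂μ = (∫ x in s, f x ∂μ) * μ.real t := by
  have hfs : StronglyMeasurable[m₁] (s.indicator f) := hf.indicator hs
  have h1t : StronglyMeasurable[m₂] (t.indicator (1 : Ω → ℝ)) :=
    stronglyMeasurable_const.indicator ht
  have hindf : IndepFun (s.indicator f) (t.indicator (1 : Ω → ℝ)) μ := by
    rw [IndepFun_iff_Indep]
    exact indep_of_indep_of_le_right
      (indep_of_indep_of_le_left hind (measurable_iff_comap_le.mp hfs.measurable))
      (measurable_iff_comap_le.mp h1t.measurable)
  have hprod : (s ∩ t).indicator f = s.indicator f * t.indicator (1 : Ω → ℝ) := by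
    ext x
    by_cases hxs : x ∈ s <;> by_cases hxt : x ∈ t <;> simp [hxs, hxt]
  rw [← integral_indicator ((h₁ s hs).inter (h₂ t ht)), hprod,
    hindf.integral_mul_eq_mul_integral (hfs.mono h₁).aestronglyMeasurable
      (h1t.mono h₂).aestronglyMeasurable,
    integral_indicator (h₁ s hs), integral_indicator_one (h₂ t ht)]

theorem condExp_sup_of_indep [IsProbabilityMeasure μ] {m₁ m₂ m₃ : MeasurableSpace Ω}
    (h₁ : m₁ ≤ m₀) (h₂ : m₂ ≤ m₀) (h₃₁ : m₃ ≤ m₁) (hind : Indep m₁ m₂ μ)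
    {f : Ω → ℝ} (hf : StronglyMeasurable[m₁] f) (hfi : Integrable f μ) :
    μ[f | m₃ ⊔ m₂] =ᵐ[μ] μ[f | m₃] := by
  have h₃ : m₃ ≤ m₀ := h₃₁.trans h₁
  refine (ae_eq_condExp_of_forall_setIntegral_eq (sup_le h₃ h₂) hfi
    (fun _ _ _ => integrable_condExp.integrableOn) (fun t ht _ => ?_)
    (stronglyMeasurable_condExp.mono le_sup_left).aestronglyMeasurable).symm
  refine setIntegral_eq_of_isPiSystem (sup_le h₃ h₂) (sup_eq_generateFrom_image2_inter m₃ m₂)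
    (isPiSystem_image2_inter_measurableSet m₃ m₂) integrable_condExp hfi ?_
    (integral_condExp h₃) ht
  rintro _ ⟨s, hs, t, ht, rfl⟩
  rw [setIntegral_inter_eq_mul_measureReal_of_indep h₃ h₂ (indep_of_indep_of_le_left hind h₃₁)
      stronglyMeasurable_condExp hs ht,
    setIntegral_inter_eq_mul_measureReal_of_indep h₁ h₂ hind hf (h₃₁ s hs) ht,
    setIntegral_condExp h₃ hfi hs]

lemma integral_mul_condExp_of_stronglyMeasurable {m : MeasurableSpace Ω} (hm : m ≤ m₀)
    [SigmaFinite (μ.trim hm)] {f g : Ω → ℝ} (hf : StronglyMeasurable[m] f)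
    (hfg : Integrable (f * g) μ) (hg : Integrable g μ) :
    ∫ x, f x * (μ[g | m]) x ∂μ = ∫ x, f x * g x ∂μ :=
  calc ∫ x, f x * (μ[g | m]) x ∂μ = ∫ x, (μ[f * g | m]) x ∂μ :=
        integral_congr_ae (condExp_mul_of_stronglyMeasurable_left hf hfg hg).symm
    _ = ∫ x, f x * g x ∂μ := integral_condExp hm

lemma integral_eq_zero_of_condExp_ae_eq_zero {m : MeasurableSpace Ω} (hm : m ≤ m₀)
    [SigmaFinite (μ.trim hm)] {f : Ω → ℝ} (hf : μ[f | m] =ᵐ[μ] 0) : ∫ x, f x ∂μ = 0 := by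
  rw [← integral_condExp hm, integral_congr_ae hf]
  simp

lemma variance_fun_sum_of_covariance_eq_zero [IsFiniteMeasure μ] {ι : Type*} [Fintype ι]
    {X : ι → Ω → ℝ} (hX : ∀ i, MemLp (X i) 2 μ)
    (hcov : Pairwise fun i j => cov[X i, X j; μ] = 0) :
    Var[fun ω => ∑ i, X i ω; μ] = ∑ i, Var[X i; μ] := by
  classical
  rw [variance_fun_sum hX]
  refine Finset.sum_congr rfl fun i _ => ?_
  rw [Finset.sum_eq_single_of_mem i (Finset.mem_univ i) fun j _ hji => hcov hji.symm,
    covariance_self (hX i).aemeasurable]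

end General

section ComapSup

variable {Ω ι : Type*} {m₀ : MeasurableSpace Ω} {E : ι → Type*} [∀ i, MeasurableSpace (E i)]

abbrev comapSup (X : ∀ i, Ω → E i) (s : Finset ι) : MeasurableSpace Ω :=
  ⨆ i ∈ s, MeasurableSpace.comap (X i) inferInstance

variable {X : ∀ i, Ω → E i}

lemma comapSup_le (hX : ∀ i, Measurable (X i)) (s : Finset ι) : comapSup X s ≤ m₀ :=
  iSup₂_le fun i _ => (hX i).comap_le

lemma comapSup_mono {s t : Finset ι} (hst : s ⊆ t) : comapSup X s ≤ comapSup X t :=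
  biSup_mono fun _ hi => hst hi

lemma comapSup_union [DecidableEq ι] (s t : Finset ι) :
    comapSup X (s ∪ t) = comapSup X s ⊔ comapSup X t :=
  Finset.iSup_union

lemma comapSup_biUnion [DecidableEq ι] {κ : Type*} (w : Finset κ) (C : κ → Finset ι) :
    comapSup X (w.biUnion C) = ⨆ j ∈ w, comapSup X (C j) :=
  Finset.iSup_biUnion w C _

lemma indep_comapSup_biUnion [DecidableEq ι] {μ : Measure Ω} {κ : Type*} {C : κ → Finset ι}
    (hX : ∀ i, Measurable (X i)) (hcover : ∀ i, ∃ j, i ∈ C j)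
    (hindep : iIndep (fun j => comapSup X (C j)) μ) {w : Finset κ} {s : Finset ι}
    (hs : Disjoint s (w.biUnion C)) :
    Indep (comapSup X (w.biUnion C)) (comapSup X s) μ := by
  rw [comapSup_biUnion]
  refine indep_of_indep_of_le_right (indep_iSup_of_disjoint (fun j => comapSup_le hX (C j))
    hindep (disjoint_compl_right (a := (w : Set κ)))) (iSup₂_le fun i hi => ?_)
  obtain ⟨j, hij⟩ := hcover i
  have hjw : j ∉ w := fun hjw =>
    Finset.disjoint_left.mp hs hi (Finset.mem_biUnion.mpr ⟨j, hjw, hij⟩)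
  exact le_iSup₂_of_le (f := fun j (_ : j ∈ (w : Set κ)ᶜ) => comapSup X (C j)) j hjw
    (le_iSup₂ (f := fun i (_ : i ∈ C j) => MeasurableSpace.comap (X i) inferInstance) i hij)

lemma condExp_comapSup_eq_inter [DecidableEq ι] {μ : Measure Ω} [IsProbabilityMeasure μ]
    (hX : ∀ i, Measurable (X i)) {s t : Finset ι}
    (hind : Indep (comapSup X t) (comapSup X (s \ t)) μ) {f : Ω → ℝ}
    (hf : StronglyMeasurable[comapSup X t] f) (hfi : Integrable f μ) :
    μ[f | comapSup X s] =ᵐ[μ] μ[f | comapSup X (s ∩ t)] := by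
  have hsplit : comapSup X s = comapSup X (s ∩ t) ⊔ comapSup X (s \ t) := by
    rw [← comapSup_union]
    exact congrArg (comapSup X) (sup_inf_sdiff s t).symm
  rw [hsplit]
  exact condExp_sup_of_indep (comapSup_le hX t) (comapSup_le hX _)
    (comapSup_mono Finset.inter_subset_right) hind hf hfi

end ComapSup

section Hoeffding

variable {Ω ι κ : Type*} {m₀ : MeasurableSpace Ω} {μ : Measure Ω} [IsProbabilityMeasure μ]
  [DecidableEq ι] {E : ι → Type*} [∀ i, MeasurableSpace (E i)] {X : ∀ i, Ω → E i}
  {C : κ → Finset ι}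

lemma condExp_comapSup_eq_inter_biUnion (hX : ∀ i, Measurable (X i))
    (hcover : ∀ i, ∃ j, i ∈ C j) (hindep : iIndep (fun j => comapSup X (C j)) μ)
    {w : Finset κ} {f : Ω → ℝ} (hf : StronglyMeasurable[comapSup X (w.biUnion C)] f)
    (hfi : Integrable f μ) (s : Finset ι) :
    μ[f | comapSup X s] =ᵐ[μ] μ[f | comapSup X (s ∩ w.biUnion C)] :=
  condExp_comapSup_eq_inter hX
    (indep_comapSup_biUnion hX hcover hindep Finset.sdiff_disjoint) hf hfi

lemma integral_condExp_mul_condExp_eq_zero (hX : ∀ i, Measurable (X i))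
    (hcover : ∀ i, ∃ j, i ∈ C j) (hindep : iIndep (fun j => comapSup X (C j)) μ)
    {G : Finset κ → Ω → ℝ}
    (hGmeas : ∀ w, StronglyMeasurable[comapSup X (w.biUnion C)] (G w))
    (hGL2 : ∀ w, MemLp (G w) 2 μ)
    (hzero : ∀ w z, ¬ w ⊆ z → μ[G w | comapSup X (z.biUnion C)] =ᵐ[μ] 0)
    (u : Finset ι) {w w' : Finset κ} (hww' : ¬ w ⊆ w') :
    ∫ ω, (μ[G w | comapSup X (u ∩ w.biUnion C)]) ω
      * (μ[G w' | comapSup X (u ∩ w'.biUnion C)]) ω ∂μ = 0 := by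
  set V := u ∩ (w.biUnion C ∪ w'.biUnion C)
  set M' := μ[G w' | comapSup X (u ∩ w'.biUnion C)]
  have hM'L2 : MemLp M' 2 μ := (hGL2 w').condExp one_le_two
  have hGi : Integrable (G w) μ := (hGL2 w).integrable one_le_two
  have hVw : V ∩ w.biUnion C = u ∩ w.biUnion C := by
    rw [Finset.inter_assoc, Finset.union_inter_cancel_left]
  have hwV : μ[G w | comapSup X V] =ᵐ[μ] μ[G w | comapSup X (u ∩ w.biUnion C)] := by
    simpa only [hVw] using condExp_comapSup_eq_inter_biUnion hX hcover hindep (hGmeas w) hGi V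
  have hM'V : StronglyMeasurable[comapSup X V] M' :=
    stronglyMeasurable_condExp.mono
      (comapSup_mono (Finset.inter_subset_inter_left Finset.subset_union_right))
  have hM'w' : StronglyMeasurable[comapSup X (w'.biUnion C)] M' :=
    stronglyMeasurable_condExp.mono (comapSup_mono Finset.inter_subset_right)
  have hM'G : Integrable (M' * G w) μ := hM'L2.integrable_mul (hGL2 w)
  calc ∫ ω, (μ[G w | comapSup X (u ∩ w.biUnion C)]) ω * M' ω ∂μ
      = ∫ ω, M' ω * (μ[G w | comapSup X V]) ω ∂μ := by
        refine integral_congr_ae ?_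
        filter_upwards [hwV] with ω hω
        rw [hω, mul_comm]
    _ = ∫ ω, M' ω * G w ω ∂μ :=
        integral_mul_condExp_of_stronglyMeasurable (comapSup_le hX V) hM'V hM'G hGi
    _ = ∫ ω, M' ω * (μ[G w | comapSup X (w'.biUnion C)]) ω ∂μ :=
        (integral_mul_condExp_of_stronglyMeasurable (comapSup_le hX _) hM'w' hM'G hGi).symm
    _ = 0 := by
        refine (integral_congr_ae ?_).trans (integral_zero Ω ℝ)
        filter_upwards [hzero w w' hww'] with ω hω
        rw [hω, Pi.zero_apply, mul_zero]

lemma covariance_condExp_eq_zero_of_not_subset (hX : ∀ i, Measurable (X i))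
    (hcover : ∀ i, ∃ j, i ∈ C j) (hindep : iIndep (fun j => comapSup X (C j)) μ)
    {G : Finset κ → Ω → ℝ}
    (hGmeas : ∀ w, StronglyMeasurable[comapSup X (w.biUnion C)] (G w))
    (hGL2 : ∀ w, MemLp (G w) 2 μ)
    (hzero : ∀ w z, ¬ w ⊆ z → μ[G w | comapSup X (z.biUnion C)] =ᵐ[μ] 0)
    (u : Finset ι) {w w' : Finset κ} (hww' : ¬ w ⊆ w') :
    cov[μ[G w | comapSup X (u ∩ w.biUnion C)], μ[G w' | comapSup X (u ∩ w'.biUnion C)]; μ]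
      = 0 := by
  have hmean : ∫ ω, (μ[G w | comapSup X (u ∩ w.biUnion C)]) ω ∂μ = 0 := by
    rw [integral_condExp (comapSup_le hX _)]
    exact integral_eq_zero_of_condExp_ae_eq_zero (comapSup_le hX _)
      (hzero w ∅ fun hw => hww' (hw.trans (Finset.empty_subset w')))
  rw [covariance_eq_sub ((hGL2 w).condExp one_le_two) ((hGL2 w').condExp one_le_two)]
  simp only [Pi.mul_apply]
  rw [integral_condExp_mul_condExp_eq_zero hX hcover hindep hGmeas hGL2 hzero u hww', hmean,
    zero_mul, sub_zero]

lemma condExp_comapSup_ae_eq_sum [Fintype κ] (hX : ∀ i, Measurable (X i))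
    (hcover : ∀ i, ∃ j, i ∈ C j) (hindep : iIndep (fun j => comapSup X (C j)) μ)
    {Y : Ω → ℝ} {G : Finset κ → Ω → ℝ}
    (hGmeas : ∀ w, StronglyMeasurable[comapSup X (w.biUnion C)] (G w))
    (hGi : ∀ w, Integrable (G w) μ) (hsum : Y =ᵐ[μ] fun ω => ∑ w, G w ω) (u : Finset ι) :
    μ[Y | comapSup X u]
      =ᵐ[μ] fun ω => ∑ w, (μ[G w | comapSup X (u ∩ w.biUnion C)]) ω := by
  have hproj : ∀ᵐ ω ∂μ, ∀ w,
      (μ[G w | comapSup X u]) ω = (μ[G w | comapSup X (u ∩ w.biUnion C)]) ω :=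
    Filter.eventually_all.mpr fun w =>
      condExp_comapSup_eq_inter_biUnion hX hcover hindep (hGmeas w) (hGi w) u
  calc μ[Y | comapSup X u] =ᵐ[μ] μ[∑ w, G w | comapSup X u] :=
        condExp_congr_ae (hsum.trans (by simp only [Finset.sum_fn]; rfl))
    _ =ᵐ[μ] ∑ w, μ[G w | comapSup X u] := condExp_finsetSum (fun w _ => hGi w) _
    _ =ᵐ[μ] fun ω => ∑ w, (μ[G w | comapSup X (u ∩ w.biUnion C)]) ω := by
        filter_upwards [hproj] with ω hω
        simp only [Finset.sum_apply, hω]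

end Hoeffding

theorem hoeffding_variance_decomposition_general
    {Ω : Type*} [MeasurableSpace Ω] (μ : Measure Ω) [IsProbabilityMeasure μ]
    {p k : ℕ} {E : Fin p → Type*} [∀ i, MeasurableSpace (E i)]
    (X : ∀ i, Ω → E i) (hX : ∀ i, Measurable (X i))
    (C : Fin k → Finset (Fin p))
    (hpart : ∀ i : Fin p, ∃! j : Fin k, i ∈ C j)
    (hindep : iIndep
      (fun j : Fin k => ⨆ i ∈ C j, MeasurableSpace.comap (X i) inferInstance) μ)
    (Y : Ω → ℝ)
    (G : Finset (Fin k) → Ω → ℝ)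
    (hGmeas : ∀ w : Finset (Fin k),
      StronglyMeasurable[⨆ i ∈ w.biUnion C, MeasurableSpace.comap (X i) inferInstance]
        (G w))
    (hGL2 : ∀ w : Finset (Fin k), MemLp (G w) 2 μ)
    (hsum : Y =ᵐ[μ] fun ω => ∑ w : Finset (Fin k), G w ω)
    (hzero : ∀ w z : Finset (Fin k), ¬ w ⊆ z →
      μ[G w | ⨆ i ∈ z.biUnion C, MeasurableSpace.comap (X i) inferInstance] =ᵐ[μ] 0)
    (u : Finset (Fin p)) :
    variance (μ[Y | ⨆ i ∈ u, MeasurableSpace.comap (X i) inferInstance]) μ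
      = ∑ w : Finset (Fin k),
          variance
            (μ[G w | ⨆ i ∈ u ∩ w.biUnion C, MeasurableSpace.comap (X i) inferInstance])
            μ := by
  have hcover : ∀ i, ∃ j, i ∈ C j := fun i => (hpart i).exists
  have hcov : Pairwise fun w w' : Finset (Fin k) =>
      cov[μ[G w | comapSup X (u ∩ w.biUnion C)], μ[G w' | comapSup X (u ∩ w'.biUnion C)]; μ]
        = 0 := by
    intro w w' hne
    by_cases hww' : w ⊆ w'
    · rw [covariance_comm]
      exact covariance_condExp_eq_zero_of_not_subset hX hcover hindep hGmeas hGL2 hzero u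
        fun hw'w => hne (hww'.antisymm hw'w)
    · exact covariance_condExp_eq_zero_of_not_subset hX hcover hindep hGmeas hGL2 hzero u hww'
  rw [variance_congr (condExp_comapSup_ae_eq_sum hX hcover hindep hGmeas
    (fun w => (hGL2 w).integrable one_le_two) hsum u)]
  exact variance_fun_sum_of_covariance_eq_zero (fun w => (hGL2 w).condExp one_le_two) hcov

/-- Proposition 1: If the groups `A_j = X_{C_j}` are mutually independent
and `Y = ∑_{w⊆[1:k]} g_w(A_w)` is the Hoeffding decomposition of `Y`, then for every
`u ⊆ [1:p]`, `Var(E(Y|X_u)) = ∑_{w⊆[1:k]} Var(E(g_w(A_w)|X_{u∩C_w}))`.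
Here `g_w(A_w)` is encoded as a random variable `G w` that is strongly measurable with
respect to the σ-algebra generated by `X_{C_w}`, and the Hoeffding property is
`E(g_w(A_w)|A_z) = 0` a.s. whenever `w ⊄ z`. -/
theorem hoeffding_variance_decomposition
    {Ω : Type*} [MeasurableSpace Ω] (μ : Measure Ω) [IsProbabilityMeasure μ]
    {p k : ℕ} {E : Fin p → Type*} [∀ i, MeasurableSpace (E i)]
    (X : ∀ i, Ω → E i) (hX : ∀ i, Measurable (X i))
    (C : Fin k → Finset (Fin p))
    (hpart : ∀ i : Fin p, ∃! j : Fin k, i ∈ C j)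
    (hindep : iIndep
      (fun j : Fin k => ⨆ i ∈ C j, MeasurableSpace.comap (X i) inferInstance) μ)
    (Y : Ω → ℝ) (hY : MemLp Y 2 μ) (hVarY : variance Y μ ≠ 0)
    (G : Finset (Fin k) → Ω → ℝ)
    (hGmeas : ∀ w : Finset (Fin k),
      StronglyMeasurable[⨆ i ∈ w.biUnion C, MeasurableSpace.comap (X i) inferInstance]
        (G w))
    (hGL2 : ∀ w : Finset (Fin k), MemLp (G w) 2 μ)
    (hsum : Y =ᵐ[μ] fun ω => ∑ w : Finset (Fin k), G w ω)
    (hzero : ∀ w z : Finset (Fin k), ¬ w ⊆ z →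
      μ[G w | ⨆ i ∈ z.biUnion C, MeasurableSpace.comap (X i) inferInstance] =ᵐ[μ] 0)
    (u : Finset (Fin p)) :
    variance (μ[Y | ⨆ i ∈ u, MeasurableSpace.comap (X i) inferInstance]) μ
      = ∑ w : Finset (Fin k),
          variance
            (μ[G w | ⨆ i ∈ u ∩ w.biUnion C, MeasurableSpace.comap (X i) inferInstance])
            μ :=
  hoeffding_variance_decomposition_general μ X hX C hpart hindep Y G hGmeas hGL2 hsum hzero u
end

section
/- Let p, c, u be integers with 1 ≤ c ≤ p and 0 ≤ u ≤ c−1. Then, as an identity of rational numbers, (1/p) ∑_{j=0}^{p−c} binom(p−c, j) · binom(p−1, u+j)^{-1} = (1/c) · binom(c−1, u)^{-1}. -/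
/-!
Write `c = b + 1` and `p = b + 1 + n` and induct on `n`. Pascal's rule turns the sum for `n + 1`
into a sum over pairs of consecutive reciprocals, and
`C(N+1, k)⁻¹ + C(N+1, k+1)⁻¹ = (N+2)/(N+1) · C(N, k)⁻¹` collapses each pair, so each step
multiplies the sum by `(b+n+2)/(b+n+1)`; hence the sum equals `(b+n+1)/((b+1) · C(b, u))`.
-/

open Finset

theorem sum_range_choose_succ_mul {R : Type*} [Semiring R] (m : ℕ) (f : ℕ → R) :
    ∑ j ∈ range (m + 2), ((m + 1).choose j : R) * f j
      = ∑ j ∈ range (m + 1), (m.choose j : R) * (f j + f (j + 1)) := by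
  have shift : ∑ j ∈ range (m + 1), (m.choose j : R) * f j
      = f 0 + ∑ i ∈ range (m + 1), (m.choose (i + 1) : R) * f (i + 1) := by
    rw [sum_range_succ' _ m, sum_range_succ _ m]
    simp [add_comm]
  simp only [mul_add, sum_add_distrib, shift]
  rw [sum_range_succ']
  simp only [Nat.choose_succ_succ', Nat.cast_add, add_mul, sum_add_distrib,
    Nat.choose_zero_right, Nat.cast_one, one_mul]
  abel

theorem inv_choose_add_inv_choose_succ {K : Type*} [Field K] [CharZero K] {n k : ℕ}
    (hk : k ≤ n) :
    (((n + 1).choose k : K))⁻¹ + (((n + 1).choose (k + 1) : K))⁻¹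
      = (n + 2) / (n + 1) * ((n.choose k : K))⁻¹ := by
  have h₁ : ((n + 1).choose k : K) * (n + 1 - k) = n.choose k * (n + 1) := by
    have := congrArg (Nat.cast (R := K)) (Nat.choose_mul_succ_eq n k)
    push_cast [Nat.cast_sub (by omega : k ≤ n + 1)] at this
    exact this.symm
  have h₂ : ((n + 1).choose (k + 1) : K) * (k + 1) = (n + 1) * n.choose k := by
    exact_mod_cast (Nat.add_one_mul_choose_eq n k).symm
  have ha : ((n + 1).choose k : K) ≠ 0 := Nat.cast_ne_zero.2 (Nat.choose_pos (by omega)).ne'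
  have hb : ((n + 1).choose (k + 1) : K) ≠ 0 :=
    Nat.cast_ne_zero.2 (Nat.choose_pos (by omega)).ne'
  have hc : (n.choose k : K) ≠ 0 := Nat.cast_ne_zero.2 (Nat.choose_pos hk).ne'
  field_simp
  linear_combination -(((n + 1).choose (k + 1) : K) * h₁ + ((n + 1).choose k : K) * h₂)

theorem sum_choose_mul_inv_choose_add {K : Type*} [Field K] [CharZero K] {b u : ℕ}
    (hu : u ≤ b) (n : ℕ) :
    ∑ j ∈ range (n + 1), (n.choose j : K) * (((b + n).choose (u + j) : K))⁻¹
      = (b + n + 1) / ((b + 1) * b.choose u) := by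
  have hb : (b + 1 : K) ≠ 0 := by exact_mod_cast b.succ_ne_zero
  have hbu : (b.choose u : K) ≠ 0 := Nat.cast_ne_zero.2 (Nat.choose_pos hu).ne'
  induction n with
  | zero =>
    simp [div_mul_cancel_left₀ hb]
  | succ n ih =>
    have pascal_step : ∀ j ∈ range (n + 1),
        (n.choose j : K) * ((((b + n + 1).choose (u + j) : K))⁻¹
          + (((b + n + 1).choose (u + (j + 1)) : K))⁻¹)
        = (b + n + 2) / (b + n + 1) * ((n.choose j : K) * (((b + n).choose (u + j) : K))⁻¹) := by
      intro j hj
      have hk : u + j ≤ b + n := by have := mem_range.1 hj; omega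
      rw [← add_assoc, inv_choose_add_inv_choose_succ hk]
      push_cast
      ring
    rw [← add_assoc, sum_range_choose_succ_mul, sum_congr rfl pascal_step, ← mul_sum, ih]
    have hN : (b + n + 1 : K) ≠ 0 := by exact_mod_cast (b + n).succ_ne_zero
    field_simp
    push_cast
    ring

/-- For integers `1 ≤ c ≤ p` and `0 ≤ u ≤ c-1`, as rational numbers,
`(1/p) ∑_{j=0}^{p-c} C(p-c, j) · C(p-1, u+j)⁻¹ = (1/c) · C(c-1, u)⁻¹`. -/
theorem inv_binom_shapley_identity (p c u : ℕ)
    (hc1 : 1 ≤ c) (hcp : c ≤ p) (hu : u ≤ c - 1) :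
    (1 / (p : ℚ)) * ∑ j ∈ Finset.range (p - c + 1),
        (Nat.choose (p - c) j : ℚ) * ((Nat.choose (p - 1) (u + j) : ℚ))⁻¹
      = (1 / (c : ℚ)) * ((Nat.choose (c - 1) u : ℚ))⁻¹ := by
  obtain ⟨b, rfl⟩ : ∃ b, c = b + 1 := ⟨c - 1, by omega⟩
  obtain ⟨n, rfl⟩ : ∃ n, p = b + 1 + n := ⟨p - (b + 1), by omega⟩
  have hp : b + 1 + n - 1 = b + n := by omega
  rw [Nat.add_sub_cancel_left, hp, Nat.add_sub_cancel, sum_choose_mul_inv_choose_add (by omega)]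
  have hbu : (b.choose u : ℚ) ≠ 0 := Nat.cast_ne_zero.2 (Nat.choose_pos (by omega)).ne'
  field_simp
  push_cast
  ring
end

section
/- For every function v from the subsets of [1:p] to ℝ and every i ∈ [1:p], the subset-weighted Shapley formula equals the average over permutations: (1/p) ∑_{u⊆[1:p]\{i}} binom(p−1,|u|)^{-1} (v(u∪{i}) − v(u)) = (1/p!) ∑_{σ∈S_p} (v(P_i(σ)∪{i}) − v(P_i(σ))), where S_p is the set of all permutations of [1:p] and P_i(σ) denotes the set of elements of [1:p] that precede i in the ordering induced by σ. -/
/-!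
Group the permutations by the set `u` of elements preceding `i`. A permutation `π` has
`{x | π x < π i} = u` exactly when it carries the colouring `u ↦ 0, i ↦ 1, rest ↦ 2` to the
colouring of positions `< #u ↦ 0, #u ↦ 1, > #u ↦ 2`; these fibres have the same sizes, so such `π`
form a coset of the stabiliser of a colouring and there are `#u! * (p - 1 - #u)!` of them.
Since `#u! * (p - 1 - #u)! / p! = 1 / (p * (p - 1).choose #u)`, the two averages agree.
-/

open Finset Equiv

theorem Equiv.Perm.card_comp_eq_of_card_fiber_eq {α β : Type*} [Fintype α] [DecidableEq α]
    [Fintype β] [DecidableEq β] {f g : α → β}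
    (h : ∀ b, Fintype.card {a // f a = b} = Fintype.card {a // g a = b}) :
    Fintype.card {π : Perm α // g ∘ π = f} = ∏ b, (Fintype.card {a // f a = b}).factorial := by
  set π₀ : Perm α := ofFiberEquiv fun b => Fintype.equivOfCardEq (h b)
  have hπ₀ (a : α) : g (π₀ a) = f a := ofFiberEquiv_map _ a
  rw [← DomMulAct.stabilizer_card f]
  refine Fintype.card_congr
    { toFun := fun π => ⟨π₀⁻¹ * π.1, ?_⟩
      invFun := fun σ => ⟨π₀ * σ.1, ?_⟩
      left_inv := fun π => by simp
      right_inv := fun σ => by simp }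
  · funext a
    simpa [← hπ₀] using congrFun π.2 a
  · funext a
    simpa [hπ₀] using congrFun σ.2 a

section splitColoring

variable {α : Type*} [DecidableEq α]

def splitColoring (i : α) (u : Finset α) (x : α) : Fin 3 :=
  if x ∈ u then 0 else if x = i then 1 else 2

lemma splitColoring_eq_zero_iff {i x : α} {u : Finset α} : splitColoring i u x = 0 ↔ x ∈ u := by
  unfold splitColoring; split_ifs <;> simp_all

lemma splitColoring_eq_one_iff {i x : α} {u : Finset α} (hi : i ∉ u) :
    splitColoring i u x = 1 ↔ x = i := by
  unfold splitColoring
  split_ifs with hxu hxi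
  · exact iff_of_false (by decide) (by rintro rfl; exact hi hxu)
  · simp [hxi]
  · simp [hxi]

lemma card_splitColoring_fiber [Fintype α] {i : α} {u : Finset α} (hi : i ∉ u) (c : Fin 3) :
    Fintype.card {x // splitColoring i u x = c} = ![#u, 1, Fintype.card α - 1 - #u] c := by
  rw [Fintype.card_subtype]
  fin_cases c
  · simp [splitColoring_eq_zero_iff]
  · simp [splitColoring_eq_one_iff hi, filter_eq']
  · show #{x | splitColoring i u x = 2} = Fintype.card α - 1 - #u
    have htwo : univ.filter (fun x => splitColoring i u x = 2) = (insert i u)ᶜ := by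
      ext x
      rw [mem_filter_univ, mem_compl, mem_insert, splitColoring]
      split_ifs <;> simp_all
    rw [htwo, card_compl, card_insert_of_notMem hi]
    omega

end splitColoring

section Preceding

variable {p : ℕ}

lemma card_filter_apply_lt_apply (π : Perm (Fin p)) (i : Fin p) : #{x | π x < π i} = π i := by
  rw [← Fin.card_Iio (π i)]
  exact card_nbij' π π.symm (by simp [Set.MapsTo]) (by simp [Set.MapsTo])
    (by simp [Set.LeftInvOn]) (by simp [Set.RightInvOn, Set.LeftInvOn])

lemma filter_apply_lt_apply_eq_iff {π : Perm (Fin p)} {i k : Fin p} {u : Finset (Fin p)}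
    (hi : i ∉ u) (hk : (k : ℕ) = #u) :
    univ.filter (fun x => π x < π i) = u ↔ splitColoring k (Iio k) ∘ π = splitColoring i u := by
  constructor
  · intro h
    have hπi : π i = k := Fin.ext (by rw [← card_filter_apply_lt_apply, h, hk])
    have hlt (x : Fin p) : π x ∈ Iio k ↔ x ∈ u := by simp [← h, hπi]
    have heq (x : Fin p) : π x = k ↔ x = i := by rw [← hπi, π.apply_eq_iff_eq]
    funext x
    simp only [Function.comp_apply, splitColoring, hlt, heq]
  · intro h
    have hπi : π i = k := by
      rw [← splitColoring_eq_one_iff (u := Iio k) (by simp),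
        ← Function.comp_apply (f := splitColoring _ _), h, splitColoring_eq_one_iff hi]
    ext x
    rw [mem_filter_univ, hπi, ← mem_Iio, ← splitColoring_eq_zero_iff (i := k),
      ← Function.comp_apply (f := splitColoring _ _), h, splitColoring_eq_zero_iff]

lemma card_perms_filter_apply_lt_apply_eq {i : Fin p} {u : Finset (Fin p)} (hi : i ∉ u) :
    #{π : Perm (Fin p) | univ.filter (fun x => π x < π i) = u} =
      (#u).factorial * (p - 1 - #u).factorial := by
  set k : Fin p := ⟨#u, by simpa using card_lt_univ_of_notMem hi⟩
  have hfiber (c : Fin 3) : Fintype.card {x // splitColoring i u x = c} =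
      Fintype.card {x // splitColoring k (Iio k) x = c} := by
    rw [card_splitColoring_fiber hi, card_splitColoring_fiber (by simp)]
    simp [k]
  rw [filter_congr fun π _ => filter_apply_lt_apply_eq_iff (k := k) hi rfl, ← Fintype.card_subtype,
    Perm.card_comp_eq_of_card_fiber_eq hfiber, Fin.prod_univ_three]
  simp [card_splitColoring_fiber hi]

lemma inv_natCast_succ_mul_inv_choose {K : Type*} [Field K] [CharZero K] {n k : ℕ} (hk : k ≤ n) :
    ((n + 1 : ℕ) : K)⁻¹ * (n.choose k : K)⁻¹ =
      k.factorial * (n - k).factorial / (n + 1).factorial := by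
  rw [Nat.cast_choose K hk, Nat.factorial_succ]
  push_cast
  field_simp

lemma sum_perm_filter_apply_lt_apply {M : Type*} [AddCommMonoid M] (D : Finset (Fin p) → M)
    (i : Fin p) :
    ∑ π : Perm (Fin p), D (univ.filter fun x => π x < π i) =
      ∑ u ∈ (univ.erase i).powerset, ((#u).factorial * (p - 1 - #u).factorial) • D u := by
  have hmaps (π : Perm (Fin p)) : univ.filter (fun x => π x < π i) ∈ (univ.erase i).powerset := by
    simp only [mem_powerset, subset_iff, mem_filter_univ, mem_erase, mem_univ, and_true]
    rintro x hx rfl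
    exact lt_irrefl _ hx
  rw [← sum_fiberwise_of_maps_to' fun π _ => hmaps π]
  refine sum_congr rfl fun u hu => ?_
  rw [sum_const, card_perms_filter_apply_lt_apply_eq fun h => by simpa using mem_powerset.1 hu h]

end Preceding

/-- For every `v : 𝒫([1:p]) → ℝ` and `i ∈ [1:p]`, the subset-weighted
Shapley formula equals the average over permutations:
`(1/p) ∑_{u ⊆ [1:p]\{i}} C(p-1,|u|)⁻¹ (v(u∪{i}) - v(u))
  = (1/p!) ∑_{σ ∈ S_p} (v(P_i(σ)∪{i}) - v(P_i(σ)))`,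
where `P_i(σ) = {x : σ⁻¹(x) < σ⁻¹(i)}` is the set of elements preceding `i` in the
ordering induced by `σ`. -/
theorem shapley_subset_eq_perm_average {p : ℕ} (v : Finset (Fin p) → ℝ) (i : Fin p) :
    (1 / (p : ℝ)) * ∑ u ∈ (Finset.univ.erase i).powerset,
        ((Nat.choose (p - 1) u.card : ℝ))⁻¹ * (v (insert i u) - v u)
      = (1 / (Nat.factorial p : ℝ)) * ∑ σ : Equiv.Perm (Fin p),
        (v (insert i (Finset.univ.filter fun x => σ.symm x < σ.symm i))
          - v (Finset.univ.filter fun x => σ.symm x < σ.symm i)) := by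
  obtain ⟨n, rfl⟩ : ∃ n, p = n + 1 := Nat.exists_eq_add_one.2 i.pos
  rw [← Equiv.sum_comp (Equiv.inv _)]
  simp only [Equiv.inv_apply, Perm.inv_def, Equiv.symm_symm]
  rw [sum_perm_filter_apply_lt_apply (fun u => v (insert i u) - v u), mul_sum, mul_sum]
  refine sum_congr rfl fun u hu => ?_
  have hcard : #u ≤ n := by simpa using card_le_card (mem_powerset.1 hu)
  rw [nsmul_eq_mul, ← mul_assoc, one_div, Nat.add_sub_cancel,
    inv_natCast_succ_mul_inv_choose hcard]
  push_cast
  ring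
end
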